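/- For all λ, μ > 0, t ≥ 0, k ∈ ℤ and real z > 0, the series Σ_{j∈ℤ} z^{2j}·p_{2k+1,2j}(t;λ,μ) converges absolutely and equals e^{−(λ+μ)t}·(z^{2k+1}/h(z))·μ(z²+1)·sinh(t·h(z)/z). -/

import Mathlib

open scoped BigOperators

/-- Inner binomial sum `∑_{k=0}^{n-m} C(n,k) C(n,k+m) ρ^{-2k-m}`. -/
noncomputable def innerSum (ρ : ℝ) (m n : ℕ) : ℝ :=
  ∑ k ∈ Finset.range (n - m + 1),
    (n.choose k : ℝ) * (n.choose (k + m) : ℝ) * ρ ^ (-(2 * (k : ℤ) + (m : ℤ)))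

/-- Series `∑_{n≥m} [x^{2n}/(2n)! + c·x^{2n+1}/(2n+1)!]·innerSum ρ m n`. -/
noncomputable def evenSeries (x c ρ : ℝ) (m : ℕ) : ℝ :=
  ∑' j : ℕ,
    ((x ^ (2 * (m + j)) / (2 * (m + j)).factorial) +
      c * (x ^ (2 * (m + j) + 1) / (2 * (m + j) + 1).factorial)) * innerSum ρ m (m + j)

/-- Series `∑_{n≥m} x^{2n+1}/(2n+1)!·innerSum ρ m n`. -/
noncomputable def oddSeries (x ρ : ℝ) (m : ℕ) : ℝ :=
  ∑' j : ℕ,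
    (x ^ (2 * (m + j) + 1) / (2 * (m + j) + 1).factorial) * innerSum ρ m (m + j)

/-- `p_{2l,2r}(t;λ,μ)`. -/
noncomputable def pEE (lam mu t : ℝ) (l r : ℤ) : ℝ :=
  Real.exp (-(lam + mu) * t) *
    evenSeries (lam * t) ((mu - lam) / lam) (lam / mu) (r - l).natAbs

/-- `p_{2l,2r+1}(t;λ,μ)`. -/
noncomputable def pEO (lam mu t : ℝ) (l r : ℤ) : ℝ :=
  Real.exp (-(lam + mu) * t) *
    (oddSeries (lam * t) (lam / mu) (r - l).natAbs +
      oddSeries (lam * t) (lam / mu) (r - l + 1).natAbs)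

/-- `p_{2l+1,2r}(t;λ,μ)`. -/
noncomputable def pOE (lam mu t : ℝ) (l r : ℤ) : ℝ :=
  Real.exp (-(lam + mu) * t) *
    (oddSeries (mu * t) (mu / lam) (r - l - 1).natAbs +
      oddSeries (mu * t) (mu / lam) (r - l).natAbs)

/-- `p_{2l+1,2r+1}(t;λ,μ)`. -/
noncomputable def pOO (lam mu t : ℝ) (l r : ℤ) : ℝ :=
  Real.exp (-(lam + mu) * t) *
    evenSeries (mu * t) ((lam - mu) / mu) (mu / lam) (r - l).natAbs

/-- Transition probability `p_{k,n}(t;λ,μ)`, by parity of the states. -/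
noncomputable def transP (lam mu t : ℝ) (k n : ℤ) : ℝ :=
  if k % 2 = 0 then
    if n % 2 = 0 then pEE lam mu t (k / 2) (n / 2)
    else pEO lam mu t (k / 2) ((n - 1) / 2)
  else
    if n % 2 = 0 then pOE lam mu t ((k - 1) / 2) (n / 2)
    else pOO lam mu t ((k - 1) / 2) ((n - 1) / 2)

/-- `h(z) = √((μz²+λ)(λz²+μ))`. -/
noncomputable def hFun (lam mu z : ℝ) : ℝ := Real.sqrt ((mu * z ^ 2 + lam) * (lam * z ^ 2 + mu))

/-!
Expanding both factors of `C^n = ((1 + w/ρ)(1 + 1/(wρ)))^n` binomially and collecting powers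
of `w` shows that the inner binomial sums are its Laurent coefficients:
`∑_j w^j innerSum ρ |j| n = C^n`. With `w = z²`, `ρ = μ/λ`, `x = μt`, summing over `j` before `n`
(legitimate since the double series converges absolutely) turns each of the two series making up
`p_{2k+1,2j}` into `w^c ∑_n x^{2n+1}/(2n+1)! · C^n = w^c sinh(x√C)/√C`, and `√C = h(z)/(μz)`.
-/

open Finset Real
open scoped Nat

theorem innerSum_eq_zero_of_lt {ρ : ℝ} {m n : ℕ} (h : n < m) : innerSum ρ m n = 0 := by
  refine sum_eq_zero fun i _ => ?_
  rw [Nat.choose_eq_zero_of_lt (by omega : n < i + m)]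
  simp

theorem div_pow_mul_one_div_mul_pow {w ρ : ℝ} (hw : w ≠ 0) (hρ : ρ ≠ 0) (a b : ℕ) :
    (w / ρ) ^ a * (1 / (w * ρ)) ^ b = w ^ ((a : ℤ) - b) * ρ ^ (-((a : ℤ) + b)) := by
  rw [zpow_sub₀ hw, zpow_neg, zpow_add₀ hρ]
  simp only [zpow_natCast, div_pow, mul_pow, one_pow]
  field_simp

/-- The coefficient of `w ^ j` collects the pairs `(a, b)` of binomial indices with `a - b = j`;
we parametrise them as `(i + j⁺, i + j⁻)`. -/
theorem sum_zpow_mul_innerSum {ρ w : ℝ} (hρ : ρ ≠ 0) (hw : w ≠ 0) (n : ℕ) :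
    ∑ j ∈ Icc (-(n : ℤ)) n, w ^ j * innerSum ρ j.natAbs n =
      ((1 + w / ρ) * (1 + 1 / (w * ρ))) ^ n := by
  have binomial (u : ℝ) : (1 + u) ^ n = ∑ a ∈ range (n + 1), u ^ a * n.choose a := by
    rw [add_comm, add_pow]; simp
  rw [mul_pow, binomial, binomial, sum_mul_sum, ← sum_product']
  simp only [innerSum, mul_sum]
  rw [sum_sigma']
  refine sum_nbij' (fun p => (p.2 + p.1.toNat, p.2 + (-p.1).toNat))
    (fun q => ⟨(q.1 : ℤ) - q.2, min q.1 q.2⟩) ?_ ?_ ?_ ?_ ?_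
  · simp only [mem_sigma, mem_Icc, mem_range, mem_product]; omega
  · simp only [mem_sigma, mem_Icc, mem_range, mem_product]; omega
  · rintro ⟨j, i⟩ -
    simp only [Sigma.mk.injEq, heq_eq_eq]
    omega
  · rintro ⟨a, b⟩ -; simp only [Prod.mk.injEq]; omega
  · rintro ⟨j, i⟩ -
    have hexp₁ : ((i + j.toNat : ℕ) : ℤ) - (i + (-j).toNat : ℕ) = j := by omega
    have hexp₂ : ((i + j.toNat : ℕ) : ℤ) + (i + (-j).toNat : ℕ) = 2 * i + j.natAbs := by omega
    have hchoose : (n.choose (i + j.toNat) * n.choose (i + (-j).toNat) : ℝ) =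
        n.choose i * n.choose (i + j.natAbs) := by
      rcases le_total 0 j with hj | hj
      · rw [show j.toNat = j.natAbs by omega, show (-j).toNat = 0 by omega, add_zero, mul_comm]
      · rw [show j.toNat = 0 by omega, show (-j).toNat = j.natAbs by omega, add_zero]
    dsimp only
    rw [mul_mul_mul_comm, div_pow_mul_one_div_mul_pow hw hρ, hexp₁, hexp₂, hchoose]
    ring

theorem innerSum_nonneg {ρ : ℝ} (hρ : 0 < ρ) (m n : ℕ) : 0 ≤ innerSum ρ m n :=
  sum_nonneg fun i _ => by have := zpow_pos hρ (-(2 * (i : ℤ) + m)); positivity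

theorem hasSum_zpow_mul_innerSum {ρ w : ℝ} (hρ : ρ ≠ 0) (hw : w ≠ 0) (n : ℕ) (c : ℤ) :
    HasSum (fun j : ℤ => w ^ j * innerSum ρ (j - c).natAbs n)
      (w ^ c * ((1 + w / ρ) * (1 + 1 / (w * ρ))) ^ n) := by
  have hcentered : HasSum (fun j : ℤ => w ^ j * innerSum ρ j.natAbs n)
      (((1 + w / ρ) * (1 + 1 / (w * ρ))) ^ n) := by
    rw [← sum_zpow_mul_innerSum hρ hw n]
    refine hasSum_sum_of_ne_finset_zero fun j hj => ?_
    rw [innerSum_eq_zero_of_lt (by rw [mem_Icc] at hj; omega), mul_zero]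
  rw [← (Equiv.addRight c).hasSum_iff]
  refine (hcentered.mul_left (w ^ c)).congr_fun fun j => ?_
  simp only [Function.comp_apply, Equiv.coe_addRight, add_sub_cancel_right, zpow_add₀ hw]
  ring

theorem hasSum_sinh_mul_sqrt_div_sqrt (x : ℝ) {C : ℝ} (hC : 0 < C) :
    HasSum (fun n : ℕ => x ^ (2 * n + 1) / (2 * n + 1)! * C ^ n) (sinh (x * √C) / √C) := by
  refine ((Real.hasSum_sinh (x * √C)).div_const √C).congr_fun fun n => ?_
  have hsqrt : √C ^ (2 * n + 1) = C ^ n * √C := by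
    rw [pow_succ, pow_mul, sq_sqrt hC.le]
  have : √C ≠ 0 := (sqrt_pos.2 hC).ne'
  rw [mul_pow, hsqrt]
  field_simp

theorem HasSum.tsum_swap_of_summable_abs {β γ : Type*} {f : β → γ → ℝ} {a : ℝ}
    (hrow : ∀ b, Summable fun c => |f b c|) (habs : Summable fun b => ∑' c, |f b c|)
    (h : HasSum (fun b => ∑' c, f b c) a) : HasSum (fun c => ∑' b, f b c) a := by
  have hsummable : Summable (Function.uncurry f) :=
    Summable.of_abs <|
      (summable_prod_of_nonneg (f := fun p => |Function.uncurry f p|) fun _ => abs_nonneg _).2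
        ⟨hrow, habs⟩
  have htotal : HasSum (Function.uncurry f) a := by
    have hfiber := hsummable.hasSum.prod_fiberwise fun b => (hsummable.prod_factor b).hasSum
    rw [h.unique hfiber]
    exact hsummable.hasSum
  have hswap : HasSum (fun p : γ × β => f p.2 p.1) a :=
    (Equiv.prodComm γ β).hasSum_iff.2 htotal
  exact hswap.prod_fiberwise fun c => (hswap.summable.prod_factor c).hasSum

theorem oddSeries_eq_tsum (x ρ : ℝ) (m : ℕ) :
    oddSeries x ρ m = ∑' n : ℕ, x ^ (2 * n + 1) / (2 * n + 1)! * innerSum ρ m n := by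
  have hsupport : Function.support (fun n : ℕ => x ^ (2 * n + 1) / (2 * n + 1)! * innerSum ρ m n)
      ⊆ Set.range (m + ·) := by
    intro n hn
    refine ⟨n - m, Nat.add_sub_cancel' ?_⟩
    by_contra hlt
    exact hn (by dsimp only; rw [innerSum_eq_zero_of_lt (by omega), mul_zero])
  exact (add_right_injective m).tsum_eq hsupport

theorem hasSum_zpow_mul_oddSeries (x : ℝ) {ρ w : ℝ} (hρ : 0 < ρ) (hw : 0 < w) (c : ℤ) :
    HasSum (fun j : ℤ => w ^ j * oddSeries x ρ (j - c).natAbs)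
      (w ^ c * (sinh (x * √((1 + w / ρ) * (1 + 1 / (w * ρ)))) /
        √((1 + w / ρ) * (1 + 1 / (w * ρ))))) := by
  set C := (1 + w / ρ) * (1 + 1 / (w * ρ))
  have hC : 0 < C := by positivity
  set a : ℕ → ℝ := fun n => x ^ (2 * n + 1) / (2 * n + 1)!
  set f : ℕ → ℤ → ℝ := fun n j => a n * (w ^ j * innerSum ρ (j - c).natAbs n)
  have hrow (n : ℕ) : HasSum (f n) (a n * (w ^ c * C ^ n)) :=
    (hasSum_zpow_mul_innerSum hρ.ne' hw.ne' n c).mul_left _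
  have hrow_abs (n : ℕ) : HasSum (fun j => |f n j|) (|a n| * (w ^ c * C ^ n)) := by
    refine ((hasSum_zpow_mul_innerSum hρ.ne' hw.ne' n c).mul_left |a n|).congr_fun fun j => ?_
    rw [abs_mul, abs_of_nonneg (mul_nonneg (zpow_nonneg hw.le _) (innerSum_nonneg hρ _ _))]
  have hseries := hasSum_sinh_mul_sqrt_div_sqrt x hC
  have habs : Summable fun n => ∑' j, |f n j| := by
    refine (hseries.summable.abs.mul_left (w ^ c)).congr fun n => ?_
    rw [(hrow_abs n).tsum_eq, abs_mul, abs_of_pos (pow_pos hC n)]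
    ring
  have htotal : HasSum (fun n => ∑' j, f n j) (w ^ c * (sinh (x * √C) / √C)) := by
    refine (hseries.mul_left (w ^ c)).congr_fun fun n => ?_
    rw [(hrow n).tsum_eq]
    ring
  refine (htotal.tsum_swap_of_summable_abs (fun n => (hrow_abs n).summable) habs).congr_fun
    fun j => ?_
  rw [oddSeries_eq_tsum, ← tsum_mul_left]
  exact tsum_congr fun n => by ring

theorem sqrt_eq_hFun_div {lam mu z : ℝ} (hlam : 0 < lam) (hmu : 0 < mu) (hz : 0 < z) :
    √((1 + z ^ 2 / (mu / lam)) * (1 + 1 / (z ^ 2 * (mu / lam)))) = hFun lam mu z / (mu * z) := by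
  rw [hFun, ← sqrt_sq (by positivity : 0 ≤ mu * z), ← sqrt_div' _ (by positivity)]
  congr 1
  field_simp
  ring

theorem hasSum_zpow_mul_pOE {lam mu : ℝ} (hlam : 0 < lam) (hmu : 0 < mu) (t : ℝ) (k : ℤ)
    {z : ℝ} (hz : 0 < z) :
    HasSum (fun j : ℤ => z ^ (2 * j) * pOE lam mu t k j)
      (Real.exp (-(lam + mu) * t) * (z ^ (2 * k + 1) / hFun lam mu z) *
        (mu * (z ^ 2 + 1) * Real.sinh (t * hFun lam mu z / z))) := by
  have hρ : 0 < mu / lam := div_pos hmu hlam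
  have hw : 0 < z ^ 2 := pow_pos hz 2
  have hshift := hasSum_zpow_mul_oddSeries (mu * t) hρ hw (k + 1)
  have hcentered := hasSum_zpow_mul_oddSeries (mu * t) hρ hw k
  rw [sqrt_eq_hFun_div hlam hmu hz] at hshift hcentered
  set S := sinh (mu * t * (hFun lam mu z / (mu * z))) / (hFun lam mu z / (mu * z)) with hS
  have hvalue : Real.exp (-(lam + mu) * t) * ((z ^ 2) ^ (k + 1) * S + (z ^ 2) ^ k * S) =
      Real.exp (-(lam + mu) * t) * (z ^ (2 * k + 1) / hFun lam mu z) *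
        (mu * (z ^ 2 + 1) * sinh (t * hFun lam mu z / z)) := by
    have hh : 0 < hFun lam mu z := sqrt_pos.2 (by positivity)
    have harg : mu * t * (hFun lam mu z / (mu * z)) = t * hFun lam mu z / z := by
      field_simp
    rw [hS, harg, zpow_add₀ hz.ne', zpow_add₀ hw.ne', zpow_mul, zpow_one, zpow_one, zpow_ofNat]
    field_simp
  rw [← hvalue]
  refine ((hshift.add hcentered).mul_left _).congr_fun fun j => ?_
  unfold pOE
  rw [zpow_mul, zpow_ofNat, sub_sub]
  ring

theorem transP_odd_even (lam mu t : ℝ) (k j : ℤ) :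
    transP lam mu t (2 * k + 1) (2 * j) = pOE lam mu t k j := by
  have hk_odd : (2 * k + 1) % 2 ≠ 0 := by omega
  have hj_even : 2 * j % 2 = 0 := by omega
  have hk : (2 * k + 1 - 1) / 2 = k := by omega
  have hj : 2 * j / 2 = j := by omega
  simp only [transP, if_neg hk_odd, if_pos hj_even, hk, hj]

theorem odd_even_generating_function_general (lam mu : ℝ) (hlam : 0 < lam) (hmu : 0 < mu)
    (t : ℝ) (k : ℤ) (z : ℝ) (hz : 0 < z) :
    Summable (fun j : ℤ => |z ^ (2 * j) * transP lam mu t (2 * k + 1) (2 * j)|) ∧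
    ∑' j : ℤ, z ^ (2 * j) * transP lam mu t (2 * k + 1) (2 * j) =
      Real.exp (-(lam + mu) * t) * (z ^ (2 * k + 1) / hFun lam mu z) *
        (mu * (z ^ 2 + 1) * Real.sinh (t * hFun lam mu z / z)) := by
  have h := hasSum_zpow_mul_pOE hlam hmu t k hz
  simp only [transP_odd_even]
  exact ⟨h.summable.abs, h.tsum_eq⟩

/-- Odd–even generating function: `∑_{j∈ℤ} z^{2j} p_{2k+1,2j}(t)` converges absolutely and
equals `e^{-(λ+μ)t}·(z^{2k+1}/h(z))·μ(z²+1)sinh(t h(z)/z)`. -/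
theorem odd_even_generating_function (lam mu : ℝ) (hlam : 0 < lam) (hmu : 0 < mu)
    (t : ℝ) (ht : 0 ≤ t) (k : ℤ) (z : ℝ) (hz : 0 < z) :
    Summable (fun j : ℤ => |z ^ (2 * j) * transP lam mu t (2 * k + 1) (2 * j)|) ∧
    ∑' j : ℤ, z ^ (2 * j) * transP lam mu t (2 * k + 1) (2 * j) =
      Real.exp (-(lam + mu) * t) * (z ^ (2 * k + 1) / hFun lam mu z) *
        (mu * (z ^ 2 + 1) * Real.sinh (t * hFun lam mu z / z)) :=
  odd_even_generating_function_general lam mu hlam hmu t k z hz
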